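/- If a Markov kernel p on (X, 𝒳) admits a point x* and constants n ∈ ℕ, ε > 0 with p^{(n)}(x, {x*}) ≥ ε for all x ∈ X, and p has an invariant probability measure μ*, then μ* is the unique invariant probability measure and μ*({x*}) ≥ ε. -/

import Mathlib

open MeasureTheory ProbabilityTheory

/-- The `n`-step transition kernel: `stepN p 0 = id`, `stepN p (n+1) (x, E) = ∫ p(x,dy) stepN p n (y, E)`. -/
noncomputable def stepN {X : Type*} [MeasurableSpace X] (p : Kernel X X) : ℕ → Kernel X X
  | 0 => Kernel.id
  | n + 1 => (stepN p n).comp p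

/-!
Doeblin's argument. Each `p^{(n)}(x, ·)` dominates `ε δ_{x*}`, and this common part is the same
for all starting points, so one step of `p^{(n)}` multiplies the oscillation `sup f - inf f` of a
function by at most `1 - ε`. Hence the oscillation of `x ↦ p^{(nk)}(x, E)` is at most `(1 - ε)^k`.
Integrating against two invariant probability measures, their values on `E` differ by at most
`(1 - ε)^k` for every `k`, so they agree. Finally `μ*({x*}) = ∫ p^{(n)}(x, {x*}) dμ* ≥ ε`.
-/

section

variable {X : Type*} [MeasurableSpace X]

instance isMarkovKernel_stepN (p : Kernel X X) [IsMarkovKernel p] (n : ℕ) :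
    IsMarkovKernel (stepN p n) := by
  induction n with
  | zero => rw [stepN]; infer_instance
  | succ n ih => rw [stepN]; infer_instance

lemma stepN_succ_apply (p : Kernel X X) (n : ℕ) (x : X) {E : Set X} (hE : MeasurableSet E) :
    stepN p (n + 1) x E = ∫⁻ y, stepN p n y E ∂(p x) := by
  rw [stepN, Kernel.comp_apply' _ _ _ hE]

lemma ProbabilityTheory.Kernel.invariant_iff {κ : Kernel X X} {μ : Measure X} :
    κ.Invariant μ ↔ ∀ E : Set X, MeasurableSet E → μ E = ∫⁻ x, κ x E ∂μ := by
  refine ⟨fun h E hE => ?_, fun h => Measure.ext fun E hE => ?_⟩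
  · conv_lhs => rw [← h.def]
    exact Measure.bind_apply hE κ.aemeasurable
  · rw [Measure.bind_apply hE κ.aemeasurable, h E hE]

lemma ProbabilityTheory.Kernel.Invariant.stepN {p : Kernel X X} {μ : Measure X}
    (h : p.Invariant μ) (n : ℕ) :
    (stepN p n).Invariant μ := by
  induction n with
  | zero => exact Measure.id_comp
  | succ n ih => exact ih.comp h

lemma lintegral_le_lintegral_add_of_le_add {σ τ : Measure X} (hστ : σ Set.univ = τ Set.univ)
    {f : X → ENNReal} {c : ENNReal} (hf : ∀ x y, f x ≤ f y + c) :
    ∫⁻ x, f x ∂σ ≤ ∫⁻ x, f x ∂τ + c * τ Set.univ := by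
  have hsup : ⨆ x, f x ≤ (⨅ y, f y) + c := by
    refine iSup_le fun x => ?_
    rw [ENNReal.iInf_add]
    exact le_iInf (hf x)
  calc ∫⁻ x, f x ∂σ ≤ ∫⁻ _, ⨆ x, f x ∂σ := lintegral_mono (le_iSup f)
    _ = (⨆ x, f x) * τ Set.univ := by rw [lintegral_const, hστ]
    _ ≤ ((⨅ y, f y) + c) * τ Set.univ := by gcongr
    _ = ∫⁻ _, ⨅ y, f y ∂τ + c * τ Set.univ := by rw [add_mul, lintegral_const]
    _ ≤ ∫⁻ x, f x ∂τ + c * τ Set.univ := by gcongr; exact iInf_le f _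

lemma MeasureTheory.Measure.smul_dirac_le {μ : Measure X} {a : X} {ε : ENNReal} (h : ε ≤ μ {a}) :
    ε • Measure.dirac a ≤ μ := by
  refine Measure.le_iff.2 fun E hE => ?_
  rw [Measure.smul_apply, Measure.dirac_apply' _ hE, smul_eq_mul]
  by_cases ha : a ∈ E
  · simpa [ha] using h.trans (measure_mono (Set.singleton_subset_iff.2 ha))
  · simp [ha]

variable [MeasurableSingletonClass X]

lemma lintegral_le_lintegral_add_of_minorization {κ : Kernel X X} [IsMarkovKernel κ] {a : X}
    {ε : ENNReal} (hmin : ∀ x, ε ≤ κ x {a}) {f : X → ENNReal} {c : ENNReal}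
    (hf : ∀ x y, f x ≤ f y + c) (x y : X) :
    ∫⁻ w, f w ∂(κ x) ≤ ∫⁻ w, f w ∂(κ y) + (1 - ε) * c := by
  set ρ : X → Measure X := fun z => κ z - ε • Measure.dirac a
  have : IsFiniteMeasure (ε • Measure.dirac a) :=
    isFiniteMeasure_of_le _ (Measure.smul_dirac_le (hmin a))
  have hκ z : κ z = ρ z + ε • Measure.dirac a :=
    (Measure.sub_add_cancel_of_le (Measure.smul_dirac_le (hmin z))).symm
  have hmass z : ρ z Set.univ = 1 - ε := by
    rw [Measure.sub_apply MeasurableSet.univ (Measure.smul_dirac_le (hmin z))]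
    simp
  have hρ z : ∫⁻ w, f w ∂(κ z) = ∫⁻ w, f w ∂(ρ z) + ε * f a := by
    rw [hκ z, lintegral_add_measure, lintegral_smul_measure, lintegral_dirac, smul_eq_mul]
  have hrest : ∫⁻ w, f w ∂(ρ x) ≤ ∫⁻ w, f w ∂(ρ y) + c * (1 - ε) := by
    simpa only [hmass y] using
      lintegral_le_lintegral_add_of_le_add ((hmass x).trans (hmass y).symm) hf
  calc ∫⁻ w, f w ∂(κ x) = ∫⁻ w, f w ∂(ρ x) + ε * f a := hρ x
    _ ≤ ∫⁻ w, f w ∂(ρ y) + c * (1 - ε) + ε * f a := by gcongr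
    _ = ∫⁻ w, f w ∂(κ y) + (1 - ε) * c := by rw [hρ y]; ring

lemma stepN_apply_le_add_pow {κ : Kernel X X} [IsMarkovKernel κ] {a : X} {ε : ENNReal}
    (hmin : ∀ x, ε ≤ κ x {a}) {E : Set X} (hE : MeasurableSet E) (k : ℕ) (x y : X) :
    stepN κ k x E ≤ stepN κ k y E + (1 - ε) ^ k := by
  induction k generalizing x y with
  | zero => simpa using le_add_left prob_le_one
  | succ k ih =>
    rw [stepN_succ_apply _ _ _ hE, stepN_succ_apply _ _ _ hE, pow_succ']
    exact lintegral_le_lintegral_add_of_minorization hmin ih x y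

lemma measure_le_of_invariant_of_minorization {κ : Kernel X X} [IsMarkovKernel κ] {a : X}
    {ε : ENNReal} (hε : 0 < ε) (hmin : ∀ x, ε ≤ κ x {a}) {σ τ : Measure X}
    [IsProbabilityMeasure σ] [IsProbabilityMeasure τ] (hσ : κ.Invariant σ) (hτ : κ.Invariant τ)
    {E : Set X} (hE : MeasurableSet E) :
    σ E ≤ τ E := by
  have hbound k : σ E ≤ τ E + (1 - ε) ^ k := by
    rw [Kernel.invariant_iff.1 (hσ.stepN k) E hE, Kernel.invariant_iff.1 (hτ.stepN k) E hE]
    have hmass : σ Set.univ = τ Set.univ := by simp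
    simpa using lintegral_le_lintegral_add_of_le_add hmass (stepN_apply_le_add_pow hmin hE k)
  have hlim : Filter.Tendsto (fun k => τ E + (1 - ε) ^ k) Filter.atTop (nhds (τ E)) := by
    have hcontr : 1 - ε < 1 := ENNReal.sub_lt_self ENNReal.one_ne_top one_ne_zero hε.ne'
    simpa using tendsto_const_nhds.add (ENNReal.tendsto_pow_atTop_nhds_zero_of_lt_one hcontr)
  exact ge_of_tendsto' hlim hbound

lemma le_measure_singleton_of_invariant {κ : Kernel X X} {a : X} {ε : ENNReal}
    (hmin : ∀ x, ε ≤ κ x {a}) {μ : Measure X} [IsProbabilityMeasure μ] (hμ : κ.Invariant μ) :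
    ε ≤ μ {a} := by
  rw [Kernel.invariant_iff.1 hμ _ (measurableSet_singleton a)]
  simpa using lintegral_mono hmin (μ := μ)

end

/-- If `p^{(n)}(x, {x*}) ≥ ε > 0` for all `x`, and `μ*` is an invariant probability measure,
then `μ*` is the unique invariant probability measure and `μ*({x*}) ≥ ε`. -/
theorem unique_invariant_measure_of_minorization
    {X : Type*} [MeasurableSpace X] [MeasurableSingletonClass X]
    (p : Kernel X X) [IsMarkovKernel p]
    (xstar : X) (n : ℕ) (ε : ENNReal) (hε : 0 < ε)
    (hmin : ∀ x : X, ε ≤ stepN p n x {xstar})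
    (μstar : Measure X) [IsProbabilityMeasure μstar]
    (hinv : ∀ E : Set X, MeasurableSet E → μstar E = ∫⁻ x, p x E ∂μstar) :
    (∀ ν : Measure X, IsProbabilityMeasure ν →
      (∀ E : Set X, MeasurableSet E → ν E = ∫⁻ x, p x E ∂ν) → ν = μstar) ∧
    ε ≤ μstar {xstar} := by
  have hμ : (stepN p n).Invariant μstar := (Kernel.invariant_iff.2 hinv).stepN n
  refine ⟨fun ν _ hνinv => ?_, le_measure_singleton_of_invariant hmin hμ⟩
  have hν : (stepN p n).Invariant ν := (Kernel.invariant_iff.2 hνinv).stepN n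
  ext E hE
  exact le_antisymm (measure_le_of_invariant_of_minorization hε hmin hν hμ hE)
    (measure_le_of_invariant_of_minorization hε hmin hμ hν hE)
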